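/- arXiv:2406.04289 — 3 statements merged into one kernel-verified Lean document; each statement's English description precedes it below -/
import Mathlib

section
/- Total probability of a probabilistic finite-state automaton with uniformly bounded halting probability: if every state's continuation probability is at most 1 − ε for some ε > 0 (equivalently, every state halts with probability at least ε), then the sum over all finite paths of their weights equals 1; i.e., the automaton defines a probability distribution over finite strings. -/
/-- The weight of a path of a PFSA, given the transition weights `w` and the
final (halting) weights `ρ`: starting in a state, a path is a list of
(symbol, next-state) pairs; the weight is the product of the transition weights
times the halting weight of the last state. -/
noncomputable def pathWeight {Q A : Type*} (w : Q → A → Q → ℝ) (ρ : Q → ℝ) :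
    Q → List (A × Q) → ℝ
  | q, [] => ρ q
  | q, (a, q') :: rest => w q a q' * pathWeight w ρ q' rest

open Finset

/-- The finset of lists of length at most `n`. -/
def Lle (A Q : Type*) [Fintype A] [Fintype Q] [DecidableEq A] [DecidableEq Q] :
    ℕ → Finset (List (A × Q))
  | 0 => {[]}
  | n+1 => insert [] (((Finset.univ : Finset (A × Q)) ×ˢ Lle A Q n).image fun p => p.1 :: p.2)

lemma mem_Lle {A Q : Type*} [Fintype A] [Fintype Q] [DecidableEq A] [DecidableEq Q] :
    ∀ (n : ℕ) (l : List (A × Q)), l.length ≤ n → l ∈ Lle A Q n := by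
  intro n
  induction n with
  | zero =>
    intro l h
    simp only [Nat.le_zero, List.length_eq_zero_iff] at h
    simp [Lle, h]
  | succ n ih =>
    intro l h
    cases l with
    | nil => simp [Lle]
    | cons p rest =>
      simp only [Lle, Finset.mem_insert, Finset.mem_image]
      right
      exact ⟨(p, rest), by simpa using ih rest (by simpa using h), rfl⟩

lemma sum_Lle_succ {A Q : Type*} [Fintype A] [Fintype Q] [DecidableEq A] [DecidableEq Q]
    (F : List (A × Q) → ℝ) (n : ℕ) :
    ∑ l ∈ Lle A Q (n+1), F l
      = F [] + ∑ aq : A × Q, ∑ l ∈ Lle A Q n, F (aq :: l) := by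
  show ∑ l ∈ insert [] (((Finset.univ : Finset (A × Q)) ×ˢ Lle A Q n).image
      fun p => p.1 :: p.2), F l = _
  rw [Finset.sum_insert (by simp), Finset.sum_image
    (by intro p _ q _ h; simp only [List.cons.injEq] at h; exact Prod.ext h.1 h.2),
    Finset.sum_product]

lemma pathWeight_cons {Q A : Type*} (w : Q → A → Q → ℝ) (ρ : Q → ℝ)
    (q : Q) (aq : A × Q) (l : List (A × Q)) :
    pathWeight w ρ q (aq :: l) = w q aq.1 aq.2 * pathWeight w ρ aq.2 l := by
  obtain ⟨a, q'⟩ := aq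
  rfl

lemma pathWeight_nonneg {Q A : Type*} (w : Q → A → Q → ℝ) (ρ : Q → ℝ)
    (hw : ∀ q a q', 0 ≤ w q a q') (hρ : ∀ q, 0 ≤ ρ q) :
    ∀ (l : List (A × Q)) (q : Q), 0 ≤ pathWeight w ρ q l := by
  intro l
  induction l with
  | nil => intro q; exact hρ q
  | cons p rest ih =>
    intro q
    exact mul_nonneg (hw q p.1 p.2) (ih p.2)

lemma sum_pathWeight_bounds {Q A : Type*} [Fintype Q] [Fintype A]
    [DecidableEq A] [DecidableEq Q]
    (ρ : Q → ℝ) (w : Q → A → Q → ℝ) (ε : ℝ) (hε : 0 < ε) (hε1 : ε ≤ 1)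
    (hw : ∀ q a q', 0 ≤ w q a q')
    (hnorm : ∀ q, ρ q + ∑ a, ∑ q', w q a q' = 1)
    (hρ : ∀ q, ε ≤ ρ q) :
    ∀ (n : ℕ) (q : Q), 1 - (1-ε)^(n+1) ≤ ∑ l ∈ Lle A Q n, pathWeight w ρ q l ∧
      ∑ l ∈ Lle A Q n, pathWeight w ρ q l ≤ 1 := by
  intro n
  induction n with
  | zero =>
    intro q
    have h1 : ∑ l ∈ Lle A Q 0, pathWeight w ρ q l = ρ q := by simp [Lle, pathWeight]
    have h2 : 0 ≤ ∑ a : A, ∑ q' : Q, w q a q' :=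
      Finset.sum_nonneg fun a _ => Finset.sum_nonneg fun q' _ => hw q a q'
    constructor
    · rw [h1]
      have := hρ q
      have hp1 : (1-ε)^(0+1) = 1-ε := by rw [zero_add, pow_one]
      linarith
    · rw [h1]; linarith [hnorm q]
  | succ n ih =>
    intro q
    have key : ∑ l ∈ Lle A Q (n+1), pathWeight w ρ q l
        = ρ q + ∑ aq : A × Q, w q aq.1 aq.2 * ∑ l ∈ Lle A Q n, pathWeight w ρ aq.2 l := by
      rw [sum_Lle_succ]
      congr 1
      apply Finset.sum_congr rfl
      intro aq _
      rw [Finset.mul_sum]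
      apply Finset.sum_congr rfl
      intro l _
      exact pathWeight_cons w ρ q aq l
    have hC : ∑ aq : A × Q, w q aq.1 aq.2 = 1 - ρ q := by
      have := hnorm q
      rw [Fintype.sum_prod_type]
      linarith
    have hCnn : (0:ℝ) ≤ ∑ aq : A × Q, w q aq.1 aq.2 :=
      Finset.sum_nonneg fun aq _ => hw q aq.1 aq.2
    have hpow : (0:ℝ) ≤ (1-ε)^(n+1) := pow_nonneg (by linarith) _
    constructor
    · rw [key]
      have hge : ρ q + (∑ aq : A × Q, w q aq.1 aq.2) * (1 - (1-ε)^(n+1))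
          ≤ ρ q + ∑ aq : A × Q, w q aq.1 aq.2 * ∑ l ∈ Lle A Q n, pathWeight w ρ aq.2 l := by
        gcongr with aq
        · rw [Finset.sum_mul]
          apply Finset.sum_le_sum
          intro aq _
          exact mul_le_mul_of_nonneg_left (ih aq.2).1 (hw q aq.1 aq.2)
      have hρ1 : ρ q ≤ 1 := by
        have h2 : 0 ≤ ∑ a : A, ∑ q' : Q, w q a q' :=
          Finset.sum_nonneg fun a _ => Finset.sum_nonneg fun q' _ => hw q a q'
        linarith [hnorm q]
      have : 1 - (1-ε)^(n+1+1) ≤ ρ q + (∑ aq : A × Q, w q aq.1 aq.2) * (1 - (1-ε)^(n+1)) := by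
        rw [hC]
        have h1 : (1 - ρ q) * (1-ε)^(n+1) ≤ (1-ε) * (1-ε)^(n+1) := by
          apply mul_le_mul_of_nonneg_right _ hpow
          linarith [hρ q]
        have h2 : (1-ε)^(n+1+1) = (1-ε) * (1-ε)^(n+1) := by ring
        nlinarith
      linarith
    · rw [key]
      have hle : ∑ aq : A × Q, w q aq.1 aq.2 * ∑ l ∈ Lle A Q n, pathWeight w ρ aq.2 l
          ≤ ∑ aq : A × Q, w q aq.1 aq.2 * 1 := by
        apply Finset.sum_le_sum
        intro aq _
        exact mul_le_mul_of_nonneg_left (ih aq.2).2 (hw q aq.1 aq.2)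
      simp only [mul_one] at hle
      rw [hC] at hle
      linarith

theorem pfsa_total_probability_one (Q A : Type*) [Fintype Q] [Fintype A]
    (lam ρ : Q → ℝ) (w : Q → A → Q → ℝ) (ε : ℝ) (hε : 0 < ε)
    (hlam : ∀ q, 0 ≤ lam q) (hlam1 : ∑ q, lam q = 1)
    (hw : ∀ q a q', 0 ≤ w q a q')
    (hnorm : ∀ q, ρ q + ∑ a, ∑ q', w q a q' = 1)
    (hρ : ∀ q, ε ≤ ρ q) :
    HasSum (fun p : Q × List (A × Q) => lam p.1 * pathWeight w ρ p.1 p.2) 1 := by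
  classical
  -- Q is nonempty
  have hQne : Nonempty Q := by
    by_contra h
    rw [not_nonempty_iff] at h
    simp [Finset.univ_eq_empty] at hlam1
  obtain ⟨q0⟩ := hQne
  have hρ1 : ∀ q, ρ q ≤ 1 := by
    intro q
    have h2 : 0 ≤ ∑ a : A, ∑ q' : Q, w q a q' :=
      Finset.sum_nonneg fun a _ => Finset.sum_nonneg fun q' _ => hw q a q'
    linarith [hnorm q]
  have hε1 : ε ≤ 1 := le_trans (hρ q0) (hρ1 q0)
  have hρnn : ∀ q, 0 ≤ ρ q := fun q => le_trans hε.le (hρ q)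
  have hpw := pathWeight_nonneg w ρ hw hρnn
  set f : Q × List (A × Q) → ℝ := fun p => lam p.1 * pathWeight w ρ p.1 p.2 with hf
  have hfnn : ∀ p, 0 ≤ f p := fun p => mul_nonneg (hlam p.1) (hpw p.2 p.1)
  have hbounds := sum_pathWeight_bounds (A := A) ρ w ε hε hε1 hw hnorm hρ
  -- sum over the box univ ×ˢ Lle A Q n
  have hbox : ∀ n : ℕ, ∑ p ∈ (Finset.univ : Finset Q) ×ˢ Lle A Q n, f p
      = ∑ q : Q, lam q * ∑ l ∈ Lle A Q n, pathWeight w ρ q l := by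
    intro n
    rw [Finset.sum_product]
    apply Finset.sum_congr rfl
    intro q _
    rw [Finset.mul_sum]
  have hbox_le : ∀ n : ℕ, ∑ p ∈ (Finset.univ : Finset Q) ×ˢ Lle A Q n, f p ≤ 1 := by
    intro n
    rw [hbox n, ← hlam1]
    apply Finset.sum_le_sum
    intro q _
    calc lam q * ∑ l ∈ Lle A Q n, pathWeight w ρ q l ≤ lam q * 1 :=
      mul_le_mul_of_nonneg_left (hbounds n q).2 (hlam q)
    _ = lam q := mul_one _
  have hbox_ge : ∀ n : ℕ, 1 - (1-ε)^(n+1)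
      ≤ ∑ p ∈ (Finset.univ : Finset Q) ×ˢ Lle A Q n, f p := by
    intro n
    rw [hbox n]
    calc (1 : ℝ) - (1-ε)^(n+1) = ∑ q : Q, lam q * (1 - (1-ε)^(n+1)) := by
          rw [← Finset.sum_mul, hlam1, one_mul]
    _ ≤ ∑ q : Q, lam q * ∑ l ∈ Lle A Q n, pathWeight w ρ q l := by
          apply Finset.sum_le_sum
          intro q _
          exact mul_le_mul_of_nonneg_left (hbounds n q).1 (hlam q)
  apply hasSum_of_isLUB_of_nonneg 1 hfnn
  constructor
  · rintro x ⟨s, rfl⟩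
    set N := s.sup fun p => p.2.length with hN
    have hsub : s ⊆ (Finset.univ : Finset Q) ×ˢ Lle A Q N := by
      intro p hp
      rw [Finset.mem_product]
      exact ⟨Finset.mem_univ _, mem_Lle N p.2 (Finset.le_sup (f := fun p => p.2.length) hp)⟩
    calc ∑ p ∈ s, f p ≤ ∑ p ∈ (Finset.univ : Finset Q) ×ˢ Lle A Q N, f p :=
      Finset.sum_le_sum_of_subset_of_nonneg hsub (fun p _ _ => hfnn p)
    _ ≤ 1 := hbox_le N
  · intro b hb
    have hub : ∀ n : ℕ, 1 - (1-ε)^(n+1) ≤ b := by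
      intro n
      exact le_trans (hbox_ge n) (hb ⟨(Finset.univ : Finset Q) ×ˢ Lle A Q n, rfl⟩)
    have htend : Filter.Tendsto (fun n : ℕ => 1 - (1-ε)^(n+1)) Filter.atTop (nhds 1) := by
      have h1 : Filter.Tendsto (fun n : ℕ => (1-ε)^(n+1)) Filter.atTop (nhds 0) := by
        have := tendsto_pow_atTop_nhds_zero_of_lt_one (by linarith : (0:ℝ) ≤ 1-ε)
          (by linarith : (1:ℝ)-ε < 1)
        exact this.comp (Filter.tendsto_add_atTop_nat 1)
      have := Filter.Tendsto.sub (tendsto_const_nhds (x := (1:ℝ))) h1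
      simpa using this
    exact le_of_tendsto htend (Filter.Eventually.of_forall hub)
end

section
/- Entropy decomposition for a terminating finite-state Markov process: let M be the n×n substochastic transition matrix (row sums < 1) of a deterministic PFSA with local conditional distributions over next symbols and EOS at each state, let α be the initial distribution, and let ξ_i be the Shannon entropy of the local next-symbol-or-EOS distribution at state i. Then the entropy of the induced distribution over finite paths equals αᵀ (I − M)^{-1} ξ. -/
/-- The probability that a deterministic PFSA with transition function `next`,
transition weights `w`, and halting weights `ρ` generates the string `y`
starting from state `q`. -/
noncomputable def strWeight {Q A : Type*} (next : Q → A → Q) (w : Q → A → ℝ)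
    (ρ : Q → ℝ) : Q → List A → ℝ
  | q, [] => ρ q
  | q, a :: rest => w q a * strWeight next w ρ (next q a) rest

/-!
Sort the words by length. Let `T k` and `G k` be the vectors, indexed by the start state, of the
total weight and of the total `negMulLog` of the weights of the words of length `k`. Since the
weight of `a :: y` from `q` is `w q a` times the weight of `y` from `next q a`, and
`negMulLog (x * y) = y * negMulLog x + x * negMulLog y`, we get `T (k + 1) = M T k` and
`G (k + 1) = M G k + L T k`, where `L` is the transition matrix with weights `negMulLog (w q a)`.
Halting probabilities bounded away from zero make `M` a contraction for the sup norm, so both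
series converge, and their sums are the unique solutions of `T = ρ + M T`, namely `T = 1`, and of
`G = negMulLog ∘ ρ + L 1 + M G = ξ + M G`, namely `G = (1 - M)⁻¹ ξ`. All terms being nonnegative,
summing by length is the same as summing over all words.
-/

open Finset Matrix Real
open scoped NNReal

section Layers

variable {A R : Type*} [Fintype A] [AddCommMonoid R]

def layerSum (f : List A → R) (k : ℕ) : R :=
  ∑ v : Fin k → A, f (List.ofFn v)

@[simp]
theorem layerSum_zero (f : List A → R) : layerSum f 0 = f [] := by
  simp [layerSum]

theorem layerSum_succ (f : List A → R) (k : ℕ) :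
    layerSum f (k + 1) = ∑ a, layerSum (fun y => f (a :: y)) k := by
  rw [layerSum, ← (Fin.consEquiv fun _ => A).sum_comp, Fintype.sum_prod_type]
  simp [layerSum, Fin.consEquiv, List.ofFn_succ]

theorem hasSum_of_hasSum_layerSum {f : List A → ℝ} (hf : ∀ y, 0 ≤ f y) {s : ℝ}
    (h : HasSum (layerSum f) s) : HasSum f s := by
  have hsigma : Summable fun p : Σ k, Fin k → A => f (List.ofFn p.2) :=
    (summable_sigma_of_nonneg fun _ => hf _).2
      ⟨fun _ => (hasSum_fintype _).summable, h.summable.congr fun _ => (tsum_fintype _).symm⟩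
  exact List.equivSigmaTuple.symm.hasSum_iff.1
    (h.sigma_of_hasSum (fun _ => hasSum_fintype _) hsigma)

end Layers

section Contraction

variable {E F : Type*} [NormedAddCommGroup E] {c : ℝ≥0}

theorem eq_of_eq_add_of_norm_map_le [FunLike F E E] [AddMonoidHomClass F E E] {f : F}
    (hc : c < 1) (hf : ∀ v, ‖f v‖ ≤ c * ‖v‖) {a x y : E}
    (hx : x = a + f x) (hy : y = a + f y) : x = y := by
  have hfix : f (x - y) = x - y := by
    rw [map_sub, ← add_sub_add_left_eq_sub (f x) (f y) a, ← hx, ← hy]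
  have hle : ‖x - y‖ ≤ c * ‖x - y‖ := by simpa only [hfix] using hf (x - y)
  have hc' : (c : ℝ) < 1 := hc
  have hzero : ‖x - y‖ = 0 := by nlinarith [norm_nonneg (x - y)]
  exact sub_eq_zero.1 (norm_eq_zero.1 hzero)

theorem summable_norm_of_recurrence {f : E → E} (hc : c < 1) (hf : ∀ v, ‖f v‖ ≤ c * ‖v‖)
    {u b : ℕ → E} (hu : ∀ k, u (k + 1) = f (u k) + b k) (hb : Summable fun k => ‖b k‖) :
    Summable fun k => ‖u k‖ := by
  have hc' : (c : ℝ) < 1 := hc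
  set B := ∑' k, ‖b k‖
  set D := (‖u 0‖ + B) / (1 - c)
  have hD : ‖u 0‖ + c * D + B = D := by
    linear_combination -div_mul_cancel₀ (‖u 0‖ + B) (sub_ne_zero.2 hc'.ne')
  have hstep : ∀ k, ‖u (k + 1)‖ ≤ c * ‖u k‖ + ‖b k‖ := fun k => by
    rw [hu]; exact (norm_add_le _ _).trans (by gcongr; exact hf _)
  refine summable_of_sum_range_le (c := D) (fun _ => norm_nonneg _) fun K => ?_
  induction K with
  | zero => simp only [range_zero, sum_empty, D]; positivity
  | succ K ih =>
    calc ∑ k ∈ range (K + 1), ‖u k‖ = ‖u 0‖ + ∑ k ∈ range K, ‖u (k + 1)‖ := by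
          rw [sum_range_succ']; ring
      _ ≤ ‖u 0‖ + (c * ∑ k ∈ range K, ‖u k‖ + ∑ k ∈ range K, ‖b k‖) := by
          rw [mul_sum, ← sum_add_distrib]; gcongr with k; exact hstep k
      _ ≤ ‖u 0‖ + (c * D + B) := by
          gcongr; exact hb.sum_le_tsum _ fun _ _ => norm_nonneg _
      _ = D := by rw [← add_assoc]; exact hD

theorem hasSum_of_recurrence [CompleteSpace E] [FunLike F E E] [AddMonoidHomClass F E E]
    {f : F} (hc : c < 1) (hf : ∀ v, ‖f v‖ ≤ c * ‖v‖)
    {u b : ℕ → E} (hu : ∀ k, u (k + 1) = f (u k) + b k) (hb : Summable fun k => ‖b k‖) {s : E}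
    (hs : s = u 0 + ∑' k, b k + f s) : HasSum u s := by
  have hsum : Summable u := (summable_norm_of_recurrence hc hf hu hb).of_norm
  have hcont : Continuous f := AddMonoidHomClass.continuous_of_bound f c hf
  have hshift : HasSum (fun k => u (k + 1)) (f (∑' k, u k) + ∑' k, b k) := by
    simpa only [hu, Function.comp_apply] using (hsum.hasSum.map f hcont).add hb.of_norm.hasSum
  have hfix : ∑' k, u k = u 0 + ∑' k, b k + f (∑' k, u k) :=
    (hsum.hasSum.unique hshift.zero_add).trans (by abel)
  exact eq_of_eq_add_of_norm_map_le hc hf hfix hs ▸ hsum.hasSum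

end Contraction

section TransitionMatrix

variable {Q A : Type*} [Fintype Q] [DecidableEq Q] [Fintype A] (next : Q → A → Q)

def transitionMatrix {R : Type*} [AddCommMonoid R] (f : Q → A → R) : Matrix Q Q R :=
  Matrix.of fun i j => ∑ a, if next i a = j then f i a else 0

theorem transitionMatrix_mulVec {R : Type*} [NonUnitalNonAssocSemiring R] (f : Q → A → R)
    (v : Q → R) (i : Q) : (transitionMatrix next f *ᵥ v) i = ∑ a, f i a * v (next i a) := by
  simp only [transitionMatrix, mulVec, dotProduct, of_apply, sum_mul, ite_mul, zero_mul]
  rw [sum_comm]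
  simp

theorem norm_transitionMatrix_mulVec_le {f : Q → A → ℝ} {C : ℝ≥0} (hf : ∀ i, ∑ a, |f i a| ≤ C)
    (v : Q → ℝ) : ‖transitionMatrix next f *ᵥ v‖ ≤ C * ‖v‖ := by
  refine (pi_norm_le_iff_of_nonneg (by positivity)).2 fun i => ?_
  rw [transitionMatrix_mulVec]
  calc ‖∑ a, f i a * v (next i a)‖ ≤ ∑ a, |f i a| * ‖v‖ :=
        norm_sum_le_of_le _ fun a _ => by
          rw [norm_mul, Real.norm_eq_abs]; gcongr; exact norm_le_pi_norm v _
    _ = (∑ a, |f i a|) * ‖v‖ := (sum_mul ..).symm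
    _ ≤ C * ‖v‖ := by gcongr; exact hf i

end TransitionMatrix

theorem isUnit_det_one_sub_of_norm_mulVec_le {Q : Type*} [Fintype Q] [DecidableEq Q]
    {M : Matrix Q Q ℝ} {c : ℝ≥0} (hc : c < 1) (hM : ∀ v, ‖M *ᵥ v‖ ≤ c * ‖v‖) :
    IsUnit (1 - M).det := by
  refine isUnit_iff_ne_zero.2 fun hdet => ?_
  obtain ⟨v, hv0, hv⟩ := exists_mulVec_eq_zero_iff.2 hdet
  rw [sub_mulVec, one_mulVec, sub_eq_zero] at hv
  exact hv0 (eq_of_eq_add_of_norm_map_le (f := M.mulVecLin) hc hM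
    (a := 0) (by simpa using hv) (by simp))

theorem inv_one_sub_mulVec_eq {Q R : Type*} [Fintype Q] [DecidableEq Q] [CommRing R]
    {M : Matrix Q Q R} (hM : IsUnit (1 - M).det) (v : Q → R) :
    (1 - M)⁻¹ *ᵥ v = v + M *ᵥ ((1 - M)⁻¹ *ᵥ v) := by
  have h : (1 - M) *ᵥ ((1 - M)⁻¹ *ᵥ v) = v := by
    rw [mulVec_mulVec, mul_nonsing_inv _ hM, one_mulVec]
  rw [sub_mulVec, one_mulVec] at h
  exact sub_eq_iff_eq_add.1 h

section DPFSA

variable {Q A : Type*} (next : Q → A → Q) (w : Q → A → ℝ) (ρ : Q → ℝ)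

@[simp]
theorem strWeight_nil (q : Q) : strWeight next w ρ q [] = ρ q := rfl

@[simp]
theorem strWeight_cons (q : Q) (a : A) (y : List A) :
    strWeight next w ρ q (a :: y) = w q a * strWeight next w ρ (next q a) y := rfl

theorem strWeight_mem_Icc (hw : ∀ q a, w q a ∈ Set.Icc 0 1) (hρ : ∀ q, ρ q ∈ Set.Icc 0 1)
    (q : Q) (y : List A) : strWeight next w ρ q y ∈ Set.Icc 0 1 := by
  induction y generalizing q with
  | nil => exact hρ q
  | cons a y ih =>
    obtain ⟨hw0, hw1⟩ := hw q a
    obtain ⟨ih0, ih1⟩ := ih (next q a)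
    exact ⟨mul_nonneg hw0 ih0, mul_le_one₀ hw1 ih0 ih1⟩

variable [Fintype A]

noncomputable def lengthMass (k : ℕ) (q : Q) : ℝ :=
  layerSum (strWeight next w ρ q) k

noncomputable def lengthEntropy (k : ℕ) (q : Q) : ℝ :=
  layerSum (fun y => negMulLog (strWeight next w ρ q y)) k

noncomputable def localEntropy (q : Q) : ℝ :=
  negMulLog (ρ q) + ∑ a, negMulLog (w q a)

variable [Fintype Q] [DecidableEq Q]

theorem lengthMass_succ (k : ℕ) :
    lengthMass next w ρ (k + 1) = transitionMatrix next w *ᵥ lengthMass next w ρ k := by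
  ext q
  rw [lengthMass, layerSum_succ, transitionMatrix_mulVec]
  simp [lengthMass, layerSum, mul_sum]

theorem lengthEntropy_succ (k : ℕ) :
    lengthEntropy next w ρ (k + 1) =
      transitionMatrix next w *ᵥ lengthEntropy next w ρ k +
        transitionMatrix next (fun q a => negMulLog (w q a)) *ᵥ lengthMass next w ρ k := by
  ext q
  rw [lengthEntropy, layerSum_succ, Pi.add_apply, transitionMatrix_mulVec,
    transitionMatrix_mulVec, ← sum_add_distrib]
  simp [lengthEntropy, lengthMass, negMulLog_mul, layerSum, mul_sum, sum_add_distrib, mul_comm]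
  ring

variable {next w ρ}

theorem exists_norm_transitionMatrix_mulVec_le (hw : ∀ q a, 0 ≤ w q a) (hρ : ∀ q, 0 < ρ q)
    (hnorm : ∀ q, ρ q + ∑ a, w q a = 1) :
    ∃ c : ℝ≥0, c < 1 ∧ ∀ v, ‖transitionMatrix next w *ᵥ v‖ ≤ c * ‖v‖ := by
  refine ⟨univ.sup fun q => (∑ a, w q a).toNNReal,
    (Finset.sup_lt_iff zero_lt_one).2 fun q _ =>
      Real.toNNReal_lt_one.2 (by linarith [hρ q, hnorm q]),
    norm_transitionMatrix_mulVec_le next fun q => ?_⟩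
  simp_rw [abs_of_nonneg (hw q _)]
  exact (Real.le_coe_toNNReal _).trans
    (NNReal.coe_le_coe.2 (le_sup (f := fun q => (∑ a, w q a).toNNReal) (mem_univ q)))

theorem hasSum_lengthMass (hw : ∀ q a, 0 ≤ w q a) (hρ : ∀ q, 0 < ρ q)
    (hnorm : ∀ q, ρ q + ∑ a, w q a = 1) : HasSum (lengthMass next w ρ) 1 := by
  obtain ⟨c, hc, hM⟩ := exists_norm_transitionMatrix_mulVec_le hw hρ hnorm
  refine hasSum_of_recurrence (f := (transitionMatrix next w).mulVecLin) (b := 0) hc hM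
    (fun k => by simp [lengthMass_succ]) (by simp) ?_
  ext q
  simp [transitionMatrix_mulVec, lengthMass]
  linarith [hnorm q]

theorem hasSum_lengthEntropy (hw : ∀ q a, 0 ≤ w q a) (hρ : ∀ q, 0 < ρ q)
    (hnorm : ∀ q, ρ q + ∑ a, w q a = 1) :
    HasSum (lengthEntropy next w ρ) ((1 - transitionMatrix next w)⁻¹ *ᵥ localEntropy w ρ) := by
  set M := transitionMatrix next w
  set L := transitionMatrix next fun q a => negMulLog (w q a)
  obtain ⟨c, hc, hM⟩ := exists_norm_transitionMatrix_mulVec_le hw hρ hnorm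
  have hmass : HasSum (fun k => L *ᵥ lengthMass next w ρ k) (L *ᵥ 1) :=
    (hasSum_lengthMass hw hρ hnorm).map L.mulVecLin (LinearMap.continuous_of_finiteDimensional _)
  refine hasSum_of_recurrence (f := M.mulVecLin) hc hM (lengthEntropy_succ next w ρ)
    (summable_norm_iff.2 hmass.summable) ?_
  have hξ : lengthEntropy next w ρ 0 + L *ᵥ 1 = localEntropy w ρ := by
    ext q
    simp [lengthEntropy, L, transitionMatrix_mulVec, localEntropy]
  rw [hmass.tsum_eq, hξ, mulVecLin_apply]
  exact inv_one_sub_mulVec_eq (isUnit_det_one_sub_of_norm_mulVec_le hc hM) _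

variable (next w ρ) in
theorem hasSum_negMulLog_strWeight (hw : ∀ q a, 0 ≤ w q a) (hρ : ∀ q, 0 < ρ q)
    (hnorm : ∀ q, ρ q + ∑ a, w q a = 1) (q : Q) :
    HasSum (fun y => negMulLog (strWeight next w ρ q y))
      (((1 - transitionMatrix next w)⁻¹ *ᵥ localEntropy w ρ) q) := by
  have hw1 : ∀ q a, w q a ∈ Set.Icc 0 1 := fun q a =>
    ⟨hw q a, by linarith [hρ q, hnorm q, single_le_sum (fun a _ => hw q a) (mem_univ a)]⟩
  have hρ1 : ∀ q, ρ q ∈ Set.Icc 0 1 := fun q =>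
    ⟨(hρ q).le, by linarith [hnorm q, sum_nonneg fun a (_ : a ∈ univ) => hw q a]⟩
  refine hasSum_of_hasSum_layerSum (fun y => ?_)
    (Pi.hasSum.1 (hasSum_lengthEntropy hw hρ hnorm) q)
  obtain ⟨h0, h1⟩ := strWeight_mem_Icc next w ρ hw1 hρ1 q y
  exact negMulLog_nonneg h0 h1

end DPFSA

theorem dpfsa_entropy_decomposition (n : ℕ) (A : Type*) [Fintype A]
    (next : Fin n → A → Fin n) (w : Fin n → A → ℝ) (ρ : Fin n → ℝ)
    (ε : ℝ) (hε : 0 < ε)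
    (hw : ∀ i a, 0 ≤ w i a) (hρ : ∀ i, ε < ρ i)
    (hnorm : ∀ i, ρ i + ∑ a, w i a = 1)
    (M : Matrix (Fin n) (Fin n) ℝ)
    (hM : ∀ i j, M i j = ∑ a, if next i a = j then w i a else 0)
    (ξ : Fin n → ℝ)
    (hξ : ∀ i, ξ i = -(∑ a, w i a * Real.log (w i a)) - ρ i * Real.log (ρ i))
    (α : Fin n → ℝ) (q0 : Fin n) (hα : α = Pi.single q0 1) :
    HasSum
      (fun p : Fin n × List A =>
        -((α p.1 * strWeight next w ρ p.1 p.2) *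
            Real.log (α p.1 * strWeight next w ρ p.1 p.2)))
      (dotProduct (Matrix.vecMul α (1 - M)⁻¹) ξ) := by
  obtain rfl : M = transitionMatrix next w := Matrix.ext hM
  obtain rfl : ξ = localEntropy w ρ := funext fun i => by
    simp [hξ i, localEntropy, negMulLog, sum_neg_distrib]; ring
  subst hα
  have hstart := hasSum_negMulLog_strWeight next w ρ hw (fun i => hε.trans (hρ i)) hnorm q0
  rw [← dotProduct_mulVec, single_dotProduct, one_mul]
  refine (Function.Injective.hasSum_iff (Prod.mk_right_injective q0) fun p hp => ?_).1 ?_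
  · have hp1 : p.1 ≠ q0 := fun h => hp ⟨p.2, Prod.ext h.symm rfl⟩
    simp [Pi.single_eq_of_ne hp1]
  · simpa [Function.comp_def, negMulLog] using hstart
end

section
/- Lower bound on hidden-state size for representing a minimal deterministic PFSA: let p be the language model of a minimal DPFSA A with full support, written in softmax form p(ȳ | y_{<t}) = softmax(T h_A(y_{<t}))_{ȳ} where h_A maps prefixes to one-hot state encodings in {0,1}^{|Q|} and T ∈ R^{(|Σ|+1)×|Q|} has rank R. Then any representation-based LM q with q(ȳ | y_{<t}) = softmax(E h(y_{<t}))_{ȳ}, E ∈ R^{(|Σ|+1)×D}, that defines the same conditional distributions for all prefixes must satisfy D ≥ R − 1. -/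
noncomputable def softmax {m : ℕ} (x : Fin m → ℝ) : Fin m → ℝ :=
  fun i => Real.exp (x i) / ∑ j, Real.exp (x j)

lemma softmax_eq_shift {m : ℕ} (x y : Fin m → ℝ) (hxy : softmax x = softmax y) :
    ∃ c : ℝ, ∀ i, x i = y i + c := by
  have hSx : (0:ℝ) < ∑ j, Real.exp (x j) ∨ m = 0 := by
    rcases Nat.eq_zero_or_pos m with hm | hm
    · exact Or.inr hm
    · left
      apply Finset.sum_pos (fun j _ => Real.exp_pos _)
      have : Nonempty (Fin m) := Fin.pos_iff_nonempty.mp hm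
      exact Finset.univ_nonempty
  rcases hSx with hSx | hm
  · have hSy : (0:ℝ) < ∑ j, Real.exp (y j) := by
      apply Finset.sum_pos (fun j _ => Real.exp_pos _)
      have : Nonempty (Fin m) := by
        by_contra hm
        rw [not_nonempty_iff] at hm
        simp [Finset.univ_eq_empty] at hSx
      exact Finset.univ_nonempty
    refine ⟨Real.log ((∑ j, Real.exp (x j)) / ∑ j, Real.exp (y j)), fun i => ?_⟩
    have := congrFun hxy i
    unfold softmax at this
    have hx : Real.exp (x i) = Real.exp (y i) * ((∑ j, Real.exp (x j)) / ∑ j, Real.exp (y j)) := by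
      field_simp at this ⊢
      linarith [this]
    have := congrArg Real.log hx
    rw [Real.log_exp, Real.log_mul (Real.exp_ne_zero _)
      (ne_of_gt (div_pos hSx hSy)), Real.log_exp] at this
    exact this
  · subst hm
    exact ⟨0, fun i => Fin.elim0 i⟩

theorem dpfsa_hidden_state_lower_bound (nA nQ D R : ℕ) (A : Type*)
    (T : Matrix (Fin (nA + 1)) (Fin nQ) ℝ)
    (E : Matrix (Fin (nA + 1)) (Fin D) ℝ)
    (hA : List A → Fin nQ → ℝ) (h : List A → Fin D → ℝ)
    (honehot : ∀ y, ∃ q : Fin nQ, hA y = Pi.single q 1)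
    (hmin : Submodule.span ℝ (Set.range hA) = ⊤)
    (hrank : T.rank = R)
    (hagree : ∀ y, softmax (E.mulVec (h y)) = softmax (T.mulVec (hA y))) :
    R - 1 ≤ D := by
  classical
  set one : Fin (nA+1) → ℝ := fun _ => 1 with hone
  set W : Submodule ℝ (Fin (nA+1) → ℝ) :=
    LinearMap.range E.mulVecLin ⊔ Submodule.span ℝ {one} with hW
  have hmem : ∀ y, T.mulVec (hA y) ∈ W := by
    intro y
    obtain ⟨c, hc⟩ := softmax_eq_shift _ _ (hagree y)
    have : T.mulVec (hA y) = E.mulVec (h y) + (-c) • one := by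
      funext i
      have := hc i
      simp [hone]
      linarith
    rw [this]
    apply Submodule.add_mem
    · exact Submodule.mem_sup_left ⟨h y, rfl⟩
    · exact Submodule.mem_sup_right (Submodule.smul_mem _ _ (Submodule.mem_span_singleton_self _))
  have hrange : LinearMap.range T.mulVecLin ≤ W := by
    rw [← Submodule.map_top, ← hmin, Submodule.map_span]
    rw [Submodule.span_le]
    rintro v ⟨u, ⟨y, rfl⟩, rfl⟩
    exact hmem y
  have h1 : R ≤ Module.finrank ℝ W := by
    rw [← hrank]
    exact Submodule.finrank_mono hrange
  have h2 : Module.finrank ℝ W ≤ D + 1 := by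
    have heq := Submodule.finrank_sup_add_finrank_inf_eq
      (LinearMap.range E.mulVecLin) (Submodule.span ℝ {one})
    rw [← hW] at heq
    have hE : Module.finrank ℝ (LinearMap.range E.mulVecLin) ≤ D := by
      have := E.rank_le_card_width
      simpa [Matrix.rank] using this
    have h1' : Module.finrank ℝ (Submodule.span ℝ {one}) = 1 := by
      apply finrank_span_singleton
      intro hc
      have := congrFun hc 0
      simp [hone] at this
    omega
  omega
end
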